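/- arXiv:1703.06126 — 5 statements merged into one kernel-verified Lean document; each statement's English description precedes it below -/
import Mathlib

section
/- Let X = {-1,1}^ℕ and let μ⁺, μ⁻ be Borel probability measures on X such that ∫ f dμ⁻ ≤ ∫ f dμ⁺ for every continuous increasing f. If ∫ x_i dμ⁺(x) = ∫ x_i dμ⁻(x) for every i ∈ ℕ, then μ⁺ = μ⁻. -/
open MeasureTheory

/-- The symbolic space `{-1,1}^ℕ`, with `true ↔ 1` and `false ↔ -1`. -/
abbrev Xsp : Type := ℕ → Bool

/-- The spin value of a symbol. -/
noncomputable def spin (b : Bool) : ℝ := if b then 1 else -1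

/-!
Write `C_B = {x | x i = 1 for all i ∈ B}` for finite `B ⊆ ℕ`. Both `2 · 𝟙_{C_B}` and
`∑_{i ∈ B} x_i - 2 · 𝟙_{C_B}` are continuous and increasing: leaving `C_B` upwards flips some
`x_i` with `i ∈ B` from `-1` to `1`, which raises the sum by `2`. Once the coordinate means
agree, stochastic domination bounds the integral of `2 · 𝟙_{C_B}` from both sides, so
`μ⁺(C_B) = μ⁻(C_B)`. The sets `C_B` form a π-system generating the product σ-algebra.
-/

lemma Continuous.integrable_of_compactSpace {α E : Type*} [TopologicalSpace α]
    [CompactSpace α] [MeasurableSpace α] [OpensMeasurableSpace α] [NormedAddCommGroup E]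
    {μ : Measure α} [IsFiniteMeasure μ] {f : α → E} (hf : Continuous f) : Integrable f μ :=
  hf.integrable_of_hasCompactSupport (HasCompactSupport.of_compactSpace f)

lemma integral_eq_of_forall_monotone_integral_le {α : Type*} [TopologicalSpace α]
    [CompactSpace α] [MeasurableSpace α] [OpensMeasurableSpace α] [Preorder α] {μ ν : Measure α}
    [IsFiniteMeasure μ] [IsFiniteMeasure ν]
    (hdom : ∀ h : α → ℝ, Continuous h → Monotone h → ∫ x, h x ∂ν ≤ ∫ x, h x ∂μ)
    {f g : α → ℝ} (hf : Continuous f) (hf_mono : Monotone f) (hg : Continuous g)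
    (hgf_mono : Monotone (g - f)) (hg_eq : ∫ x, g x ∂μ = ∫ x, g x ∂ν) :
    ∫ x, f x ∂μ = ∫ x, f x ∂ν := by
  have h_sub := hdom (g - f) (hg.sub hf) hgf_mono
  simp only [Pi.sub_apply] at h_sub
  rw [integral_sub hg.integrable_of_compactSpace hf.integrable_of_compactSpace,
    integral_sub hg.integrable_of_compactSpace hf.integrable_of_compactSpace, hg_eq] at h_sub
  exact le_antisymm (by linarith) (hdom f hf hf_mono)

lemma IsUpperSet.monotone_indicator {α M : Type*} [Preorder α] [Preorder M] [Zero M] {s : Set α}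
    (hs : IsUpperSet s) {c : M} (hc : 0 ≤ c) : Monotone (s.indicator fun _ => c) := by
  intro x y hxy
  by_cases hx : x ∈ s
  · rw [Set.indicator_of_mem hx, Set.indicator_of_mem (hs hxy hx)]
  · rw [Set.indicator_of_notMem hx]
    exact Set.indicator_nonneg (fun _ _ => hc) y

section TrueCylinder

variable {ι : Type*}

def trueCylinder (B : Finset ι) : Set (ι → Bool) := (B : Set ι).pi fun _ => {true}

lemma mem_trueCylinder {B : Finset ι} {x : ι → Bool} :
    x ∈ trueCylinder B ↔ ∀ i ∈ B, x i = true := by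
  simp [trueCylinder]

lemma trueCylinder_singleton (i : ι) :
    trueCylinder {i} = (fun x : ι → Bool => x i) ⁻¹' {true} := by
  simp [trueCylinder]

lemma isUpperSet_trueCylinder (B : Finset ι) : IsUpperSet (trueCylinder B) := by
  intro x y hxy hx
  simp only [mem_trueCylinder] at hx ⊢
  intro i hi
  exact le_antisymm (Bool.le_true _) (hx i hi ▸ hxy i)

lemma isClopen_trueCylinder (B : Finset ι) : IsClopen (trueCylinder B) :=
  ⟨isClosed_set_pi fun _ _ => isClosed_discrete _,
    isOpen_set_pi B.finite_toSet fun _ _ => isOpen_discrete _⟩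

lemma measurableSet_trueCylinder (B : Finset ι) : MeasurableSet (trueCylinder B) :=
  MeasurableSet.pi B.countable_toSet fun _ _ => MeasurableSet.singleton true

lemma isPiSystem_range_trueCylinder [DecidableEq ι] :
    IsPiSystem (Set.range (trueCylinder (ι := ι))) := by
  rintro _ ⟨B₁, rfl⟩ _ ⟨B₂, rfl⟩ -
  exact ⟨B₁ ∪ B₂, by simp [trueCylinder, Set.union_pi]⟩

lemma pi_eq_generateFrom_range_trueCylinder :
    MeasurableSpace.pi = MeasurableSpace.generateFrom (Set.range (trueCylinder (ι := ι))) := by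
  refine le_antisymm (iSup_le fun i => ?_) (MeasurableSpace.generateFrom_le ?_)
  · rw [← measurable_iff_comap_le]
    refine measurable_to_bool ?_
    rw [← trueCylinder_singleton]
    exact MeasurableSpace.measurableSet_generateFrom ⟨{i}, rfl⟩
  · rintro _ ⟨B, rfl⟩
    exact measurableSet_trueCylinder B

lemma Measure.ext_of_trueCylinder {μ ν : Measure (ι → Bool)} [IsFiniteMeasure μ]
    (h : ∀ B, μ (trueCylinder B) = ν (trueCylinder B)) : μ = ν := by
  classical
  refine ext_of_generate_finite _ pi_eq_generateFrom_range_trueCylinder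
    isPiSystem_range_trueCylinder (by rintro _ ⟨B, rfl⟩; exact h B) ?_
  simpa [trueCylinder] using h ∅

lemma monotone_spin : Monotone spin := by
  intro a b h
  cases a <;> cases b <;> first | exact absurd h (by decide) | norm_num [spin]

lemma continuous_spin_apply (i : ι) : Continuous fun x : ι → Bool => spin (x i) :=
  (continuous_of_discreteTopology (f := spin)).comp (continuous_apply i)

lemma monotone_sum_spin_sub_indicator_trueCylinder (B : Finset ι) :
    Monotone fun x : ι → Bool =>
      ∑ i ∈ B, spin (x i) - (trueCylinder B).indicator (fun _ => 2) x := by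
  intro x y hxy
  have h_sum : ∑ i ∈ B, spin (x i) ≤ ∑ i ∈ B, spin (y i) :=
    Finset.sum_le_sum fun i _ => monotone_spin (hxy i)
  by_cases hx : x ∈ trueCylinder B
  · simp only [Set.indicator_of_mem hx, Set.indicator_of_mem (isUpperSet_trueCylinder B hxy hx)]
    linarith
  by_cases hy : y ∈ trueCylinder B
  · obtain ⟨i, hi, hxi⟩ : ∃ i ∈ B, x i = false := by simpa [mem_trueCylinder] using hx
    have hyi : y i = true := mem_trueCylinder.1 hy i hi
    have h_flip : spin (y i) - spin (x i) ≤ ∑ j ∈ B, (spin (y j) - spin (x j)) :=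
      Finset.single_le_sum (fun j _ => sub_nonneg.2 (monotone_spin (hxy j))) hi
    rw [Finset.sum_sub_distrib, hxi, hyi] at h_flip
    simp only [Set.indicator_of_notMem hx, Set.indicator_of_mem hy, spin] at h_flip ⊢
    norm_num at h_flip
    linarith
  · simp only [Set.indicator_of_notMem hx, Set.indicator_of_notMem hy]
    linarith

end TrueCylinder

theorem eq_of_stochastic_domination_and_equal_coordinates
    (mup mum : Measure Xsp) [IsProbabilityMeasure mup] [IsProbabilityMeasure mum]
    (hdom : ∀ f : Xsp → ℝ, Continuous f → Monotone f →
      ∫ x, f x ∂mum ≤ ∫ x, f x ∂mup)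
    (hcoord : ∀ i : ℕ, ∫ x, spin (x i) ∂mup = ∫ x, spin (x i) ∂mum) :
    mup = mum := by
  refine Measure.ext_of_trueCylinder fun B => ?_
  have h_sum (μ : Measure Xsp) [IsFiniteMeasure μ] :
      ∫ x, ∑ i ∈ B, spin (x i) ∂μ = ∑ i ∈ B, ∫ x, spin (x i) ∂μ :=
    integral_finsetSum B fun i _ => (continuous_spin_apply i).integrable_of_compactSpace
  have h_ind := integral_eq_of_forall_monotone_integral_le hdom
    ((isClopen_trueCylinder B).continuous_indicator continuous_const)
    ((isUpperSet_trueCylinder B).monotone_indicator zero_le_two)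
    (continuous_finsetSum B fun i _ => continuous_spin_apply i)
    (monotone_sum_spin_sub_indicator_trueCylinder B)
    (by rw [h_sum mup, h_sum mum]; exact Finset.sum_congr rfl fun i _ => hcoord i)
  rw [integral_indicator_const _ (measurableSet_trueCylinder B),
    integral_indicator_const _ (measurableSet_trueCylinder B)] at h_ind
  exact (measureReal_eq_measureReal_iff).1 (by simpa using h_ind)
end

section
/- Let X = {-1,1}^ℕ and A : X → ℝ be a potential of class 𝓕, meaning that the functions x ↦ e^{A(-1x)} + e^{A(1x)} and x ↦ e^{A(1x)} are increasing in x (coordinatewise order). Then for every nonnegative increasing function f : X → ℝ, the function L_A f(x) = e^{A(1x)} f(1x) + e^{A(-1x)} f(-1x) is increasing. -/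
/-- Prepending a symbol to a sequence: `cons a x = (a, x₀, x₁, …)`. -/
def consX (a : Bool) (x : Xsp) : Xsp := fun n =>
  match n with
  | 0 => a
  | Nat.succ k => x k

/-- The Ruelle operator `L_A f(x) = Σ_{a∈{-1,1}} e^{A(ax)} f(ax)`. -/
noncomputable def ruelle (A : Xsp → ℝ) (f : Xsp → ℝ) : Xsp → ℝ := fun x =>
  Real.exp (A (consX true x)) * f (consX true x) +
  Real.exp (A (consX false x)) * f (consX false x)

lemma consX_mono (a : Bool) {x y : Xsp} (h : x ≤ y) : consX a x ≤ consX a y := by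
  intro n
  cases n with
  | zero => exact le_refl _
  | succ k => exact h k

lemma consX_false_le_true (x : Xsp) : consX false x ≤ consX true x := by
  intro n
  cases n with
  | zero => exact Bool.false_le _
  | succ k => exact le_refl _

theorem ruelle_preserves_monotone (A : Xsp → ℝ)
    (h1 : Monotone fun x : Xsp =>
      Real.exp (A (consX false x)) + Real.exp (A (consX true x)))
    (h2 : Monotone fun x : Xsp => Real.exp (A (consX true x)))
    (f : Xsp → ℝ) (hf0 : ∀ x, 0 ≤ f x) (hf : Monotone f) :
    Monotone (ruelle A f) := by
  intro x y hxy
  simp only [ruelle]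
  have hS := h1 hxy
  have hT := h2 hxy
  simp only at hS hT
  have hf1 : f (consX true x) ≤ f (consX true y) := hf (consX_mono true hxy)
  have hf0' : f (consX false x) ≤ f (consX false y) := hf (consX_mono false hxy)
  have hfx : f (consX false x) ≤ f (consX true x) := hf (consX_false_le_true x)
  have hb1 : (0:ℝ) < Real.exp (A (consX true y)) := Real.exp_pos _
  have hb0 : (0:ℝ) < Real.exp (A (consX false y)) := Real.exp_pos _
  have hp1 : 0 ≤ f (consX true x) := hf0 _
  have hp0 : 0 ≤ f (consX false x) := hf0 _
  nlinarith [mul_nonneg (sub_nonneg.2 hT) (sub_nonneg.2 hfx),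
    mul_nonneg hb1.le (sub_nonneg.2 hf1),
    mul_nonneg hb0.le (sub_nonneg.2 hf0'),
    mul_nonneg (sub_nonneg.2 hT) hp0]
end

section
/- Under the class 𝓕 hypothesis on A, for every n ≥ 1 and λ > 0 the function x ↦ λ^{-n} L_A^n(1)(x) on X = {-1,1}^ℕ is increasing with respect to the coordinatewise order. -/
lemma ruelle_preserves (A : Xsp → ℝ)
    (h1 : Monotone fun x : Xsp =>
      Real.exp (A (consX false x)) + Real.exp (A (consX true x)))
    (h2 : Monotone fun x : Xsp => Real.exp (A (consX true x)))
    (f : Xsp → ℝ) (hf : Monotone f) (hf0 : ∀ x, 0 ≤ f x) :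
    Monotone (ruelle A f) ∧ ∀ x, 0 ≤ ruelle A f x := by
  constructor
  · intro x y hxy
    simp only [ruelle]
    set gx := Real.exp (A (consX false x)) + Real.exp (A (consX true x)) with hgx
    set gy := Real.exp (A (consX false y)) + Real.exp (A (consX true y)) with hgy
    set hx := Real.exp (A (consX true x)) with hhx
    set hy := Real.exp (A (consX true y)) with hhy
    have e1 : Real.exp (A (consX false x)) = gx - hx := by rw [hgx, hhx]; ring
    have e2 : Real.exp (A (consX false y)) = gy - hy := by rw [hgy, hhy]; ring
    rw [e1, e2]
    have hgxy : gx ≤ gy := h1 hxy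
    have hhxy : hx ≤ hy := h2 hxy
    have hhx0 : 0 ≤ hx := (Real.exp_pos _).le
    have hgh : hx ≤ gx := by
      rw [hgx]; nlinarith [(Real.exp_pos (A (consX false x))).le]
    have hf1 : f (consX true x) ≤ f (consX true y) := hf (consX_mono _ hxy)
    have hf2 : f (consX false x) ≤ f (consX false y) := hf (consX_mono _ hxy)
    have hf3 : f (consX false y) ≤ f (consX true y) := hf (consX_false_le_true y)
    have hf0y : 0 ≤ f (consX false y) := hf0 _
    nlinarith [mul_nonneg (sub_nonneg.2 hhxy) (sub_nonneg.2 hf3),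
      mul_nonneg hhx0 (sub_nonneg.2 hf1),
      mul_nonneg (sub_nonneg.2 hgh) (sub_nonneg.2 hf2),
      mul_nonneg (sub_nonneg.2 hgxy) hf0y]
  · intro x
    have := hf0 (consX true x)
    have := hf0 (consX false x)
    have := (Real.exp_pos (A (consX true x))).le
    have := (Real.exp_pos (A (consX false x))).le
    simp only [ruelle]
    positivity

lemma ruelle_iter (A : Xsp → ℝ)
    (h1 : Monotone fun x : Xsp =>
      Real.exp (A (consX false x)) + Real.exp (A (consX true x)))
    (h2 : Monotone fun x : Xsp => Real.exp (A (consX true x)))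
    (n : ℕ) :
    Monotone ((ruelle A)^[n] (fun _ => (1 : ℝ))) ∧
      ∀ x, 0 ≤ (ruelle A)^[n] (fun _ => (1 : ℝ)) x := by
  induction n with
  | zero => exact ⟨monotone_const, fun _ => zero_le_one⟩
  | succ k ih =>
    rw [Function.iterate_succ_apply']
    exact ruelle_preserves A h1 h2 _ ih.1 ih.2

theorem ruelle_iterate_one_monotone (A : Xsp → ℝ)
    (h1 : Monotone fun x : Xsp =>
      Real.exp (A (consX false x)) + Real.exp (A (consX true x)))
    (h2 : Monotone fun x : Xsp => Real.exp (A (consX true x)))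
    (n : ℕ) (hn : 1 ≤ n) (lam : ℝ) (hlam : 0 < lam) :
    Monotone (fun x : Xsp => ((ruelle A)^[n] (fun _ => (1 : ℝ)) x) / lam ^ n) := by
  intro x y hxy
  have h := (ruelle_iter A h1 h2 n).1 hxy
  have hp : 0 < lam ^ n := pow_pos hlam n
  exact div_le_div_of_nonneg_right h hp.le
end

section
/- Let X = {-1,1}^ℕ (viewing potentials on the bilateral space), A(x) = Σ_{j≥1} a_j x_j with Σ_k Σ_{n≥k} |a_n| < ∞, and define W(y|x) = Σ_{i≥1} (x_i + y_i) α_i where α_i = Σ_{j>i} a_j. Then W is an involution kernel for A with A* = A: for every a ∈ {-1,1}, x ∈ {-1,1}^ℕ and y in the backward sequence space, A(ay) + W(ya|x) = A(ax) + W(y|ax). -/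
/-- The potential `A(x) = Σ_j a_j x_j`. -/
noncomputable def prodPot (a : ℕ → ℝ) (x : Xsp) : ℝ := ∑' j : ℕ, a j * spin (x j)

/-- `α_i = Σ_{j > i} a_j`. -/
noncomputable def alphaC (a : ℕ → ℝ) (i : ℕ) : ℝ := ∑' j : ℕ, a (j + i + 1)

/-- The involution kernel `W(y|x) = Σ_i (x_i + y_i) α_i`. -/
noncomputable def Wker (a : ℕ → ℝ) (y x : Xsp) : ℝ :=
  ∑' i : ℕ, (spin (x i) + spin (y i)) * alphaC a i

/-! Writing `S(z) = Σ_i z_i α_i` (absolutely convergent since `|α_i| ≤ Σ_{n>i} |a_n|`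
is summable), the kernel splits as `W(y|x) = S(x) + S(y)`. Shifting the index
and using `α_i = a_{i+1} + α_{i+1}` gives `A(sz) + S(sz) = (a_0 + α_0) s + S(z)`. Hence both sides
of the identity equal `(a_0 + α_0) s + S(x) + S(y)`, which is symmetric in `x` and `y`. -/

theorem abs_spin (b : Bool) : |spin b| = 1 := by
  cases b <;> simp [spin]

theorem summable_mul_spin {f : ℕ → ℝ} (hf : Summable fun i => |f i|) (z : Xsp) :
    Summable fun i => f i * spin (z i) :=
  Summable.of_norm_bounded hf fun i => by simp [abs_spin]

theorem summable_spin_mul {f : ℕ → ℝ} (hf : Summable fun i => |f i|) (z : Xsp) :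
    Summable fun i => spin (z i) * f i := by
  simpa only [mul_comm] using summable_mul_spin hf z

/-! If `Σ |a_n|` diverges, every series in the statement takes the junk value `0`
(including those in `hsum`), so the identity holds trivially. -/

section Degenerate

variable {a : ℕ → ℝ} (ha : ¬Summable fun n => |a n|)
include ha

theorem prodPot_eq_zero_of_not_summable (z : Xsp) : prodPot a z = 0 :=
  tsum_eq_zero_of_not_summable fun h => ha <| by simpa [abs_mul, abs_spin] using h.abs

theorem alphaC_eq_zero_of_not_summable (i : ℕ) : alphaC a i = 0 :=
  tsum_eq_zero_of_not_summable fun h => ha <| summable_abs_iff.mpr <|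
    (summable_nat_add_iff (i + 1)).mp (by simpa only [Nat.add_assoc] using h)

theorem Wker_eq_zero_of_not_summable (y x : Xsp) : Wker a y x = 0 := by
  simp [Wker, alphaC_eq_zero_of_not_summable ha]

end Degenerate

theorem abs_alphaC_le {a : ℕ → ℝ} (ha : Summable fun n => |a n|) (i : ℕ) :
    |alphaC a i| ≤ ∑' n, |a (n + (i + 1))| := by
  have hs : Summable fun n => ‖a (n + (i + 1))‖ :=
    (summable_nat_add_iff (f := fun n => |a n|) (i + 1)).mpr ha
  simpa only [alphaC, Real.norm_eq_abs, Nat.add_assoc] using norm_tsum_le_tsum_norm hs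

theorem summable_abs_alphaC {a : ℕ → ℝ} (ha : Summable fun n => |a n|)
    (hsum : Summable fun k => ∑' n, |a (n + k)|) : Summable fun i => |alphaC a i| :=
  Summable.of_nonneg_of_le (fun _ => abs_nonneg _) (abs_alphaC_le ha)
    ((summable_nat_add_iff 1).mpr hsum)

theorem alphaC_eq_add {a : ℕ → ℝ} (ha : Summable a) (k : ℕ) :
    alphaC a k = a (k + 1) + alphaC a (k + 1) := by
  have h := ((summable_nat_add_iff (k + 1)).mpr ha).tsum_eq_zero_add
  simp only [zero_add] at h
  simp only [alphaC, Nat.add_assoc, Nat.add_comm 1] at h ⊢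
  exact h

theorem prodPot_consX {a : ℕ → ℝ} (ha : Summable fun n => |a n|) (s : Bool) (z : Xsp) :
    prodPot a (consX s z) = a 0 * spin s + ∑' j, a (j + 1) * spin (z j) :=
  (summable_mul_spin ha _).tsum_eq_zero_add

noncomputable def spinSum (a : ℕ → ℝ) (z : Xsp) : ℝ := ∑' i, spin (z i) * alphaC a i

section Summable

variable {a : ℕ → ℝ} (hα : Summable fun i => |alphaC a i|)
include hα

theorem Wker_eq_spinSum_add (y x : Xsp) : Wker a y x = spinSum a x + spinSum a y := by
  simp only [Wker, spinSum, add_mul]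
  exact (summable_spin_mul hα x).tsum_add (summable_spin_mul hα y)

theorem spinSum_consX (s : Bool) (z : Xsp) :
    spinSum a (consX s z) = spin s * alphaC a 0 + ∑' i, spin (z i) * alphaC a (i + 1) :=
  (summable_spin_mul hα _).tsum_eq_zero_add

theorem tsum_mul_spin_add_tsum_spin_mul_alphaC_succ (ha : Summable fun n => |a n|) (z : Xsp) :
    ∑' j, a (j + 1) * spin (z j) + ∑' i, spin (z i) * alphaC a (i + 1) = spinSum a z := by
  have hα' : Summable fun i => |alphaC a (i + 1)| := (summable_nat_add_iff 1).mpr hα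
  rw [← (summable_mul_spin ((summable_nat_add_iff 1).mpr ha) z).tsum_add
    (summable_spin_mul hα' z)]
  refine tsum_congr fun i => ?_
  rw [alphaC_eq_add (summable_abs_iff.mp ha) i]
  ring

theorem prodPot_consX_add_spinSum_consX (ha : Summable fun n => |a n|) (s : Bool) (z : Xsp) :
    prodPot a (consX s z) + spinSum a (consX s z) =
      (a 0 + alphaC a 0) * spin s + spinSum a z := by
  rw [prodPot_consX ha, spinSum_consX hα, ← tsum_mul_spin_add_tsum_spin_mul_alphaC_succ hα ha]
  ring

end Summable

/-- `W` is an involution kernel for `A` with `A* = A`: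
`A(ay) + W(ya|x) = A(ax) + W(y|ax)`. -/
theorem involution_kernel_product_potential (a : ℕ → ℝ)
    (hsum : Summable fun k : ℕ => ∑' n : ℕ, |a (n + k)|)
    (s : Bool) (x y : Xsp) :
    prodPot a (consX s y) + Wker a (consX s y) x =
      prodPot a (consX s x) + Wker a y (consX s x) := by
  by_cases ha : Summable fun n => |a n|
  · have hα := summable_abs_alphaC ha hsum
    rw [Wker_eq_spinSum_add hα, Wker_eq_spinSum_add hα]
    linear_combination prodPot_consX_add_spinSum_consX hα ha s y -
      prodPot_consX_add_spinSum_consX hα ha s x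
  · simp only [prodPot_eq_zero_of_not_summable ha, Wker_eq_zero_of_not_summable ha]
end

section
/- Let A : {-1,1}^ℕ → ℝ be continuous and suppose W : X* × X → ℝ is a continuous involution kernel for A with dual A*, i.e., A*(ya) + W(ya|x) = A(ax) + W(y|ax) for all a ∈ {-1,1}, x ∈ X, y ∈ X*. If ν is a Borel probability on X* with L_{A*}* ν = λ ν (λ > 0), then φ(x) := ∫_{X*} e^{W(y|x)} dν(y) is a continuous positive function satisfying L_A φ = λ φ. -/
open MeasureTheory
set_option maxHeartbeats 1000000

lemma continuous_consX (a : Bool) : Continuous (consX a) := by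
  apply continuous_pi
  intro n
  cases n with
  | zero => exact continuous_const
  | succ k => exact continuous_apply k

lemma cont_integrable (nu : Measure Xsp) [IsProbabilityMeasure nu]
    (f : Xsp → ℝ) (hf : Continuous f) : Integrable f nu := by
  have hcs : HasCompactSupport f :=
    IsCompact.of_isClosed_subset isCompact_univ (isClosed_tsupport f)
      (Set.subset_univ _)
  exact hf.integrable_of_hasCompactSupport hcs

theorem eigenfunction_from_involution_kernel
    (A Astar : Xsp → ℝ) (hA : Continuous A) (hAstar : Continuous Astar)
    (W : Xsp → Xsp → ℝ) (hW : Continuous fun p : Xsp × Xsp => W p.1 p.2)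
    (hker : ∀ (s : Bool) (x y : Xsp),
      Astar (consX s y) + W (consX s y) x = A (consX s x) + W y (consX s x))
    (nu : Measure Xsp) [IsProbabilityMeasure nu] (lam : ℝ) (hlam : 0 < lam)
    (heig : ∀ g : Xsp → ℝ, Continuous g →
      ∫ y, ruelle Astar g y ∂nu = lam * ∫ y, g y ∂nu) :
    Continuous (fun x : Xsp => ∫ y, Real.exp (W y x) ∂nu) ∧
    (∀ x : Xsp, 0 < ∫ y, Real.exp (W y x) ∂nu) ∧
    (∀ x : Xsp, ruelle A (fun z => ∫ y, Real.exp (W y z) ∂nu) x =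
      lam * ∫ y, Real.exp (W y x) ∂nu) := by
  -- Continuity of the exponential of the kernel in each variable
  have hEW : Continuous fun p : Xsp × Xsp => Real.exp (W p.1 p.2) :=
    hW.rexp
  have hcy : ∀ x : Xsp, Continuous fun y => Real.exp (W y x) := by
    intro x; fun_prop
  have hcx : ∀ y : Xsp, Continuous fun x => Real.exp (W y x) := by
    intro y; fun_prop
  -- maximum and minimum of `exp ∘ W` over the compact product space
  obtain ⟨pM, hpM⟩ := hEW.exists_forall_ge
    (by rw [Filter.cocompact_eq_bot]; exact Filter.tendsto_bot)
  obtain ⟨pm, hpm⟩ := hEW.exists_forall_le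
    (by rw [Filter.cocompact_eq_bot]; exact Filter.tendsto_bot)
  set C : ℝ := Real.exp (W pM.1 pM.2) with hC
  set c : ℝ := Real.exp (W pm.1 pm.2) with hc
  have hint : ∀ x : Xsp, Integrable (fun y => Real.exp (W y x)) nu := fun x =>
    cont_integrable nu _ (hcy x)
  -- continuity of φ
  have hcont : Continuous (fun x : Xsp => ∫ y, Real.exp (W y x) ∂nu) := by
    apply continuous_of_dominated
    · intro x
      exact (hcy x).aestronglyMeasurable
    · intro x
      filter_upwards with y
      rw [Real.norm_eq_abs, abs_of_pos (Real.exp_pos _)]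
      exact hpM (y, x)
    · exact integrable_const C
    · filter_upwards with y
      exact hcx y
  refine ⟨hcont, ?_, ?_⟩
  · -- positivity
    intro x
    have h1 : c ≤ ∫ y, Real.exp (W y x) ∂nu := by
      have := integral_mono (integrable_const c) (hint x)
        (fun y => hpm (y, x))
      simpa using this
    exact lt_of_lt_of_le (Real.exp_pos _) h1
  · -- eigenfunction equation
    intro x
    have hg : Continuous fun y => Real.exp (W y x) := hcy x
    have key : ∀ y : Xsp, ruelle Astar (fun y => Real.exp (W y x)) y =
        Real.exp (A (consX true x)) * Real.exp (W y (consX true x)) +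
        Real.exp (A (consX false x)) * Real.exp (W y (consX false x)) := by
      intro y
      unfold ruelle
      rw [← Real.exp_add, ← Real.exp_add, hker true x y, hker false x y,
        Real.exp_add, Real.exp_add]
    have heq := heig _ hg
    rw [show (fun y => ruelle Astar (fun y => Real.exp (W y x)) y) =
        fun y => Real.exp (A (consX true x)) * Real.exp (W y (consX true x)) +
          Real.exp (A (consX false x)) * Real.exp (W y (consX false x))
      from funext key] at heq
    rw [integral_add ((hint _).const_mul _) ((hint _).const_mul _),
      integral_const_mul, integral_const_mul] at heq
    unfold ruelle
    exact heq
end
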